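/- Let Q be a symmetric bilinear form on ∧²V₅ (V₅ five-dimensional complex), singular at a rank-4 point p ∈ ∧²V₄ for a hyperplane V₄ ⊂ V₅, i.e., Q(p,·) = 0. Then for every v ∈ V₅ and every q ∈ ∧²V₄ one has (Q + P_v)(p, q) = α(q)·P_v(p,p), where P_v(x,y) = v ∧ x ∧ y and α is the linear form with p ∧ q = α(q) p ∧ p. In particular, if additionally P_v(p,p) = 0 then the quadric Q + P_v restricted to ∧²V₄ is singular at p. -/
import Mathlib


open ExteriorAlgebra

namespace Stmt5

variable {V : Type*} [AddCommGroup V] [Module ℂ V]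

theorem iota_mem (v : V) : (ι ℂ v : ExteriorAlgebra ℂ V) ∈ ⋀[ℂ]^1 V := by
  simpa only [pow_one] using LinearMap.mem_range_self _ v

/-- The image of the `n`-th exterior power of a subspace `W ⊆ V` inside the exterior
algebra of `V`. -/
noncomputable def exteriorSub (W : Submodule ℂ V) (n : ℕ) :
    Submodule ℂ (ExteriorAlgebra ℂ V) :=
  (LinearMap.range ((ι ℂ : V →ₗ[ℂ] ExteriorAlgebra ℂ V).comp W.subtype)) ^ n

/-- The degree-5 wedge `v ∧ x ∧ y` for `x y ∈ ⋀²V`, as an element of `⋀⁵V`. -/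
noncomputable def wedge5 (v : V) (x y : ⋀[ℂ]^2 V) : ⋀[ℂ]^5 V :=
  ⟨ι ℂ v * x.1 * y.1, by
    have h : (ι ℂ v * x.1) * y.1 ∈ ⋀[ℂ]^(1 + 2 + 2) V :=
      SetLike.mul_mem_graded (SetLike.mul_mem_graded (iota_mem v) x.2) y.2
    simpa using h⟩

/-- let `Q` be a symmetric bilinear form on `⋀²V₅` which is singular at a
rank-4 point `p ∈ ⋀²V₄` (`V₄ ⊂ V₅` a hyperplane), i.e. `Q(p,·) = 0`.  Then for every
`v ∈ V₅` and every `q ∈ ⋀²V₄`,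
`(Q + P_v)(p,q) = α(q) · P_v(p,p)`, where `P_v(x,y) = v ∧ x ∧ y` (computed via the fixed
trivialization `e : ⋀⁵V ≃ ℂ`) and `α` is the linear form with `p ∧ q = α(q)·(p ∧ p)`.
In particular, if `P_v(p,p) = 0` then the quadric `Q + P_v` restricted to `⋀²V₄` is
singular at `p`. -/
theorem singular_restriction [FiniteDimensional ℂ V]
    (h5 : Module.finrank ℂ V = 5)
    (e : (⋀[ℂ]^5 V) ≃ₗ[ℂ] ℂ)
    (V₄ : Submodule ℂ V) (h4 : Module.finrank ℂ V₄ = 4)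
    (Q : (⋀[ℂ]^2 V) →ₗ[ℂ] (⋀[ℂ]^2 V) →ₗ[ℂ] ℂ)
    (hQsymm : ∀ x y, Q x y = Q y x)
    (p : ⋀[ℂ]^2 V) (hpV₄ : (p : ExteriorAlgebra ℂ V) ∈ exteriorSub V₄ 2)
    (hpp : (p : ExteriorAlgebra ℂ V) * (p : ExteriorAlgebra ℂ V) ≠ 0)
    (hsing : ∀ y : ⋀[ℂ]^2 V, Q p y = 0)
    (α : (⋀[ℂ]^2 V) →ₗ[ℂ] ℂ)
    (hα : ∀ q : ⋀[ℂ]^2 V, (q : ExteriorAlgebra ℂ V) ∈ exteriorSub V₄ 2 →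
      (p : ExteriorAlgebra ℂ V) * (q : ExteriorAlgebra ℂ V) =
        α q • ((p : ExteriorAlgebra ℂ V) * (p : ExteriorAlgebra ℂ V))) :
    ∀ v : V, ∀ q : ⋀[ℂ]^2 V, (q : ExteriorAlgebra ℂ V) ∈ exteriorSub V₄ 2 →
      (Q p q + e (wedge5 v p q) = α q * e (wedge5 v p p)) ∧
      (e (wedge5 v p p) = 0 → Q p q + e (wedge5 v p q) = 0) := by
  intro v q hq
  have hw : wedge5 v p q = α q • wedge5 v p p := by
    apply Subtype.ext
    show ι ℂ v * p.1 * q.1 = α q • (ι ℂ v * p.1 * p.1)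
    rw [mul_assoc, hα q hq, mul_smul_comm, mul_assoc]
  have key : Q p q + e (wedge5 v p q) = α q * e (wedge5 v p p) := by
    rw [hsing q, hw, map_smul, zero_add, smul_eq_mul]
  exact ⟨key, fun h0 => by rw [key, h0, mul_zero]⟩

end Stmt5
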